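/- Let G be a finite graph with simple random walk transition matrix M, let o be a fixed vertex, and let B be a random real matrix indexed by the vertices of G with |B_{u,v}| \le c_1 M_{u,v} almost surely. Define Y_j(G,v,w) = \sum_{j_1+j_2+2=j,\, j_1,j_2 \ge 0} (B M^{j_1})_{v,w} (B M^{j_2})_{w,v} and \alpha_{ij} = E[ \sum_{v \ne o} Y_i(G,o,v) Y_j(G,o,v) ]. Then for any power series f(z) = \sum_i a_i z^i and g(z) = \sum_j b_j z^j with radius of convergence greater than 1, the double series H_G(f,g) = (1/2) \sum_{i,j \ge 1} i j \, \alpha_{ij} \, a_i b_j converges absolutely and satisfies |H_G(f,g)| \le c_1^4 \|f\|_* \|g\|_*, where \|f\|_* = \sum_{k\ge 1} k^2 |a_k|. -/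

import Mathlib

open Matrix Finset MeasureTheory

/-!
Every factor `B M^k` of `Y_j` has absolute row sums at most `c₁`: this holds for `B` by the
entrywise bound and the row sums of `M` being at most `1`, and right multiplication by the
nonnegative substochastic matrix `M` does not increase absolute row sums. Hence each entry of
`Y_j(o, ·)` is at most `j c₁²` in absolute value and so is the sum of their absolute values, which
gives `|α_{ij}| ≤ c₁⁴ i j`. The weights `i j α_{ij} a_i b_j` are then dominated by
`c₁⁴ (i² |a_i|)(j² |b_j|)`, a summable product because `k² |a_k| ≤ C |a_k| r^k` for `r > 1`.
-/

lemma summable_pow_mul_of_summable_mul_geometric {c : ℕ → ℝ} {r : ℝ} (hr : 1 < r)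
    (hc : ∀ k, 0 ≤ c k) (h : Summable fun k => c k * r ^ k) (m : ℕ) :
    Summable fun k : ℕ => (k : ℝ) ^ m * c k := by
  have hr₀ : 0 < r := one_pos.trans hr
  have hr' : |r⁻¹| < 1 := by rw [abs_inv, abs_of_pos hr₀]; exact inv_lt_one_of_one_lt₀ hr
  obtain ⟨C, hC⟩ := (tendsto_pow_const_mul_const_pow_of_abs_lt_one m hr').bddAbove_range
  refine (h.mul_left C).of_nonneg_of_le (fun k => mul_nonneg (by positivity) (hc k)) fun k => ?_
  calc (k : ℝ) ^ m * c k = ((k : ℝ) ^ m * r⁻¹ ^ k) * (c k * r ^ k) := by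
        rw [inv_pow]; field_simp
    _ ≤ C * (c k * r ^ k) :=
        mul_le_mul_of_nonneg_right (hC ⟨k, rfl⟩) (mul_nonneg (hc k) (by positivity))

lemma card_filter_add_add_two_eq_le (j : ℕ) :
    #{p ∈ range j ×ˢ range j | p.1 + p.2 + 2 = j} ≤ j := by
  refine (card_le_card_of_injOn Prod.fst (fun p hp => ?_) fun p hp q hq h => ?_).trans_eq
    (card_range j)
  · exact (mem_product.mp (mem_filter.mp hp).1).1
  · have := (mem_filter.mp hp).2
    have := (mem_filter.mp hq).2
    exact Prod.ext h (by omega)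

namespace SimpleGraph

variable {V : Type*} [Fintype V] (G : SimpleGraph V) [DecidableRel G.Adj]

-- Rows of isolated vertices vanish, so this matrix is only substochastic in general.
noncomputable def walkMatrix : Matrix V V ℝ :=
  of fun u v => if G.Adj u v then 1 / G.degree u else 0

lemma walkMatrix_nonneg (u v : V) : 0 ≤ G.walkMatrix u v := by
  simp only [walkMatrix, of_apply]; split_ifs <;> positivity

lemma sum_walkMatrix_le_one (u : V) : ∑ v, G.walkMatrix u v ≤ 1 := by
  rcases (G.degree u).eq_zero_or_pos with h | h
  · simp [walkMatrix, h]
  · simp [walkMatrix, ← sum_filter, ← neighborFinset_eq_filter, h.ne']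

end SimpleGraph

namespace Matrix

variable {l m n : Type*}

lemma abs_apply_le_of_sum_abs_le [Fintype n] {A : Matrix m n ℝ} {c : ℝ} (hA : ∀ v, ∑ w, |A v w| ≤ c)
    (v : m) (w : n) : |A v w| ≤ c :=
  (single_le_sum (fun w _ => abs_nonneg (A v w)) (mem_univ w)).trans (hA v)

lemma sum_abs_le_of_abs_le_mul [Fintype n] {A P : Matrix m n ℝ} {c : ℝ} (hc : 0 ≤ c)
    (hA : ∀ u v, |A u v| ≤ c * P u v) (hP : ∀ u, ∑ v, P u v ≤ 1) (u : m) :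
    ∑ v, |A u v| ≤ c :=
  calc ∑ v, |A u v| ≤ c * ∑ v, P u v := by rw [mul_sum]; gcongr with v; exact hA u v
    _ ≤ c := mul_le_of_le_one_right hc (hP u)

lemma sum_abs_mul_apply_le [Fintype m] [Fintype n] {X : Matrix l m ℝ} {P : Matrix m n ℝ} {c : ℝ}
    (hX : ∀ v, ∑ u, |X v u| ≤ c) (hP₀ : ∀ u w, 0 ≤ P u w) (hP₁ : ∀ u, ∑ w, P u w ≤ 1) (v : l) :
    ∑ w, |(X * P) v w| ≤ c :=
  calc ∑ w, |(X * P) v w| ≤ ∑ w, ∑ u, |X v u| * P u w := by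
        gcongr with w
        simpa only [mul_apply, abs_mul, abs_of_nonneg (hP₀ _ w)] using
          abs_sum_le_sum_abs (fun u => X v u * P u w) univ
    _ = ∑ u, |X v u| * ∑ w, P u w := by rw [sum_comm]; simp_rw [mul_sum]
    _ ≤ ∑ u, |X v u| := by
        gcongr with u; exact mul_le_of_le_one_right (abs_nonneg _) (hP₁ u)
    _ ≤ c := hX v

lemma sum_abs_mul_pow_apply_le [Fintype m] [DecidableEq m] {X : Matrix l m ℝ} {P : Matrix m m ℝ} {c : ℝ}
    (hX : ∀ v, ∑ u, |X v u| ≤ c) (hP₀ : ∀ u w, 0 ≤ P u w) (hP₁ : ∀ u, ∑ w, P u w ≤ 1)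
    (k : ℕ) (v : l) : ∑ w, |(X * P ^ k) v w| ≤ c := by
  induction k generalizing v with
  | zero => simpa using hX v
  | succ k ih => rw [pow_succ, ← Matrix.mul_assoc]; exact sum_abs_mul_apply_le ih hP₀ hP₁ v

variable [Fintype n] {A : ℕ → Matrix n n ℝ} {c : ℝ}

lemma abs_sum_mul_apply_le (hA : ∀ k v, ∑ w, |A k v w| ≤ c) (S : Finset (ℕ × ℕ)) (v w : n) :
    |∑ p ∈ S, A p.1 v w * A p.2 w v| ≤ #S * c ^ 2 := by
  have hA' := fun k => abs_apply_le_of_sum_abs_le (hA k)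
  have hc : 0 ≤ c := (abs_nonneg _).trans (hA' 0 v w)
  calc |∑ p ∈ S, A p.1 v w * A p.2 w v| ≤ ∑ p ∈ S, |A p.1 v w| * |A p.2 w v| := by
        simpa only [abs_mul] using abs_sum_le_sum_abs (fun p => A p.1 v w * A p.2 w v) S
    _ ≤ ∑ _p ∈ S, c * c := sum_le_sum fun p _ =>
        mul_le_mul (hA' _ v w) (hA' _ w v) (abs_nonneg _) hc
    _ = #S * c ^ 2 := by rw [sum_const, nsmul_eq_mul, sq]

lemma sum_abs_sum_mul_apply_le (hA : ∀ k v, ∑ w, |A k v w| ≤ c) (S : Finset (ℕ × ℕ)) (v : n) :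
    ∑ w, |∑ p ∈ S, A p.1 v w * A p.2 w v| ≤ #S * c ^ 2 := by
  have hA' := fun k => abs_apply_le_of_sum_abs_le (hA k)
  have hc : 0 ≤ c := (abs_nonneg _).trans (hA' 0 v v)
  calc ∑ w, |∑ p ∈ S, A p.1 v w * A p.2 w v| ≤ ∑ w, ∑ p ∈ S, |A p.1 v w| * c := by
        gcongr with w
        refine (abs_sum_le_sum_abs _ _).trans (sum_le_sum fun p _ => ?_)
        rw [abs_mul]; exact mul_le_mul_of_nonneg_left (hA' _ w v) (abs_nonneg _)
    _ = ∑ p ∈ S, (∑ w, |A p.1 v w|) * c := by rw [sum_comm]; simp_rw [sum_mul]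
    _ ≤ ∑ _p ∈ S, c * c := by gcongr with p; exact hA _ v
    _ = #S * c ^ 2 := by rw [sum_const, nsmul_eq_mul, sq]

lemma abs_sum_mul_sum_mul_apply_le (hA : ∀ k v, ∑ w, |A k v w| ≤ c) (S T : Finset (ℕ × ℕ))
    (s : Finset n) (o : n) :
    |∑ v ∈ s, (∑ p ∈ S, A p.1 o v * A p.2 v o) * (∑ q ∈ T, A q.1 o v * A q.2 v o)| ≤
      c ^ 4 * #S * #T :=
  calc _ ≤ ∑ v ∈ s, (#S * c ^ 2) * |∑ q ∈ T, A q.1 o v * A q.2 v o| := by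
        refine (abs_sum_le_sum_abs _ _).trans (sum_le_sum fun v _ => ?_)
        rw [abs_mul]
        exact mul_le_mul_of_nonneg_right (abs_sum_mul_apply_le hA S o v) (abs_nonneg _)
    _ ≤ (#S * c ^ 2) * ∑ v, |∑ q ∈ T, A q.1 o v * A q.2 v o| := by
        rw [← mul_sum]
        gcongr
        exact subset_univ s
    _ ≤ (#S * c ^ 2) * (#T * c ^ 2) := by gcongr; exact sum_abs_sum_mul_apply_le hA T o
    _ = c ^ 4 * #S * #T := by ring

end Matrix

lemma summable_norm_and_norm_tsum_le_of_abs_le {α : ℕ → ℕ → ℝ} {C : ℝ}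
    (hα : ∀ i j, |α i j| ≤ C * i * j) {a b : ℕ → ℂ}
    (ha : Summable fun k : ℕ => (k : ℝ) ^ 2 * ‖a k‖)
    (hb : Summable fun k : ℕ => (k : ℝ) ^ 2 * ‖b k‖) :
    Summable (fun p : ℕ × ℕ => ‖(p.1 : ℂ) * p.2 * α p.1 p.2 * a p.1 * b p.2‖) ∧
    ‖∑' p : ℕ × ℕ, (p.1 : ℂ) * p.2 * α p.1 p.2 * a p.1 * b p.2‖ ≤
      C * (∑' k : ℕ, (k : ℝ) ^ 2 * ‖a k‖) * (∑' k : ℕ, (k : ℝ) ^ 2 * ‖b k‖) := by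
  set f := fun k : ℕ => (k : ℝ) ^ 2 * ‖a k‖
  set g := fun k : ℕ => (k : ℝ) ^ 2 * ‖b k‖
  have hf₀ : 0 ≤ f := fun k => by positivity
  have hg₀ : 0 ≤ g := fun k => by positivity
  have hterm (p : ℕ × ℕ) :
      ‖(p.1 : ℂ) * p.2 * α p.1 p.2 * a p.1 * b p.2‖ ≤ C * (f p.1 * g p.2) := by
    simp only [f, g, norm_mul, Complex.norm_natCast, Complex.norm_real, Real.norm_eq_abs]
    calc (p.1 : ℝ) * p.2 * |α p.1 p.2| * ‖a p.1‖ * ‖b p.2‖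
        ≤ p.1 * p.2 * (C * p.1 * p.2) * ‖a p.1‖ * ‖b p.2‖ := by gcongr; exact hα _ _
      _ = C * (p.1 ^ 2 * ‖a p.1‖ * (p.2 ^ 2 * ‖b p.2‖)) := by ring
  have hprod : Summable fun p : ℕ × ℕ => C * (f p.1 * g p.2) :=
    (ha.mul_of_nonneg hb hf₀ hg₀).mul_left C
  have hsum := hprod.of_nonneg_of_le (fun p => norm_nonneg _) hterm
  refine ⟨hsum, ?_⟩
  calc _ ≤ ∑' p : ℕ × ℕ, ‖(p.1 : ℂ) * p.2 * α p.1 p.2 * a p.1 * b p.2‖ :=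
        norm_tsum_le_tsum_norm hsum
    _ ≤ ∑' p : ℕ × ℕ, C * (f p.1 * g p.2) := hsum.tsum_le_tsum hterm hprod
    _ = C * (∑' k, f k) * (∑' k, g k) := by
        rw [tsum_mul_left, mul_assoc, tsum_mul_tsum_of_summable_norm] <;>
          simpa [Real.norm_eq_abs, abs_of_nonneg (hf₀ _), abs_of_nonneg (hg₀ _)]

theorem H_G_abs_convergent_and_bounded_general {V : Type*} [Fintype V] [DecidableEq V]
    (G : SimpleGraph V) [DecidableRel G.Adj] (o : V)
    (M : Matrix V V ℝ)
    (hM : ∀ u v : V, M u v = if G.Adj u v then (1 : ℝ) / (G.degree u) else 0)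
    {Ω : Type*} [MeasurableSpace Ω] (μ : Measure Ω) [IsProbabilityMeasure μ]
    (B : Ω → Matrix V V ℝ)
    (c₁ : ℝ) (hc₁ : 0 < c₁)
    (hBbound : ∀ᵐ ω ∂μ, ∀ u v, |B ω u v| ≤ c₁ * M u v)
    (Y : ℕ → V → V → Ω → ℝ)
    (hY : ∀ j v w ω, Y j v w ω =
      ∑ p ∈ (Finset.range j ×ˢ Finset.range j).filter (fun p => p.1 + p.2 + 2 = j),
        (B ω * M ^ p.1) v w * (B ω * M ^ p.2) w v)
    (α : ℕ → ℕ → ℝ)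
    (hα : ∀ i j, α i j = ∫ ω, ∑ v ∈ Finset.univ.erase o, Y i o v ω * Y j o v ω ∂μ)
    (a b : ℕ → ℂ)
    (hf : ∃ r : ℝ, 1 < r ∧ Summable fun k => ‖(a k)‖ * r ^ k)
    (hg : ∃ r : ℝ, 1 < r ∧ Summable fun k => ‖(b k)‖ * r ^ k) :
    Summable (fun p : ℕ × ℕ =>
      ‖((p.1 : ℂ) * (p.2 : ℂ) * (α p.1 p.2 : ℂ) * a p.1 * b p.2)‖) ∧
    ‖((1 / 2 : ℂ) *
        ∑' p : ℕ × ℕ, (p.1 : ℂ) * (p.2 : ℂ) * (α p.1 p.2 : ℂ) * a p.1 * b p.2)‖ ≤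
      c₁ ^ 4 * (∑' k : ℕ, (k : ℝ) ^ 2 * ‖(a k)‖) *
        (∑' k : ℕ, (k : ℝ) ^ 2 * ‖(b k)‖) := by
  obtain rfl : M = G.walkMatrix := Matrix.ext hM
  have hrow : ∀ᵐ ω ∂μ, ∀ k v, ∑ w, |(B ω * G.walkMatrix ^ k) v w| ≤ c₁ := by
    filter_upwards [hBbound] with ω hω k v
    exact sum_abs_mul_pow_apply_le
      (sum_abs_le_of_abs_le_mul hc₁.le hω G.sum_walkMatrix_le_one) G.walkMatrix_nonneg
      G.sum_walkMatrix_le_one k v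
  have hαle (i j : ℕ) : |α i j| ≤ c₁ ^ 4 * i * j := by
    rw [hα, ← Real.norm_eq_abs]
    refine (norm_integral_le_of_norm_le_const (C := c₁ ^ 4 * i * j) ?_).trans_eq (by simp)
    filter_upwards [hrow] with ω hω
    simp only [hY, Real.norm_eq_abs]
    refine (abs_sum_mul_sum_mul_apply_le hω _ _ _ o).trans ?_
    gcongr <;> exact_mod_cast card_filter_add_add_two_eq_le _
  obtain ⟨r, hr, ha⟩ := hf
  obtain ⟨s, hs, hb⟩ := hg
  obtain ⟨hsum, hle⟩ := summable_norm_and_norm_tsum_le_of_abs_le hαle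
    (summable_pow_mul_of_summable_mul_geometric hr (fun _ => norm_nonneg _) ha 2)
    (summable_pow_mul_of_summable_mul_geometric hs (fun _ => norm_nonneg _) hb 2)
  refine ⟨hsum, ?_⟩
  rw [norm_mul, norm_div, norm_one, Complex.norm_ofNat]
  linarith [norm_nonneg (∑' p : ℕ × ℕ, (p.1 : ℂ) * p.2 * α p.1 p.2 * a p.1 * b p.2)]

/-- For a finite graph `G` with walk matrix `M`, a fixed vertex `o`, and a
random matrix `B` with `|B_{u,v}| ≤ c₁ M_{u,v}` a.s., the bilinear form
`H_G(f,g) = (1/2) ∑_{i,j} i j α_{ij} a_i b_j` converges absolutely and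
`|H_G(f,g)| ≤ c₁⁴ ‖f‖_* ‖g‖_*` for power series of radius of convergence `> 1`. -/
theorem H_G_abs_convergent_and_bounded {V : Type*} [Fintype V] [DecidableEq V]
    (G : SimpleGraph V) [DecidableRel G.Adj] (o : V)
    (M : Matrix V V ℝ)
    (hM : ∀ u v : V, M u v = if G.Adj u v then (1 : ℝ) / (G.degree u) else 0)
    {Ω : Type*} [MeasurableSpace Ω] (μ : Measure Ω) [IsProbabilityMeasure μ]
    (B : Ω → Matrix V V ℝ) (hBmeas : ∀ u v, Measurable fun ω => B ω u v)
    (c₁ : ℝ) (hc₁ : 0 < c₁)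
    (hBbound : ∀ᵐ ω ∂μ, ∀ u v, |B ω u v| ≤ c₁ * M u v)
    (Y : ℕ → V → V → Ω → ℝ)
    (hY : ∀ j v w ω, Y j v w ω =
      ∑ p ∈ (Finset.range j ×ˢ Finset.range j).filter (fun p => p.1 + p.2 + 2 = j),
        (B ω * M ^ p.1) v w * (B ω * M ^ p.2) w v)
    (α : ℕ → ℕ → ℝ)
    (hα : ∀ i j, α i j = ∫ ω, ∑ v ∈ Finset.univ.erase o, Y i o v ω * Y j o v ω ∂μ)
    (a b : ℕ → ℂ)
    (hf : ∃ r : ℝ, 1 < r ∧ Summable fun k => ‖(a k)‖ * r ^ k)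
    (hg : ∃ r : ℝ, 1 < r ∧ Summable fun k => ‖(b k)‖ * r ^ k) :
    Summable (fun p : ℕ × ℕ =>
      ‖((p.1 : ℂ) * (p.2 : ℂ) * (α p.1 p.2 : ℂ) * a p.1 * b p.2)‖) ∧
    ‖((1 / 2 : ℂ) *
        ∑' p : ℕ × ℕ, (p.1 : ℂ) * (p.2 : ℂ) * (α p.1 p.2 : ℂ) * a p.1 * b p.2)‖ ≤
      c₁ ^ 4 * (∑' k : ℕ, (k : ℝ) ^ 2 * ‖(a k)‖) *
        (∑' k : ℕ, (k : ℝ) ^ 2 * ‖(b k)‖) :=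
  H_G_abs_convergent_and_bounded_general G o M hM μ B c₁ hc₁ hBbound Y hY α hα a b hf hg
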